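/- Let d ∈ ℕ and r ∈ ℕ. There exists a constant C > 0, depending only on d and r, such that for every v ∈ ℕ_0 and every u ∈ ℝ^d with all coordinates u_j > 0, the following hold for σ^r(v,u) := ∑_{s ∈ ℕ_0^d, s_1+…+s_d = v} ∏_{j=1}^d min((2^{s_j} u_j)^{r/2}, (2^{s_j} u_j)^{−r/2}) and pr(u,d) := ∏_{j=1}^d u_j: (I) if 2^v · pr(u,d) ≥ 1 then σ^r(v,u) ≤ C · (log(2^{v+1} · pr(u,d)))^{d−1} / (2^v · pr(u,d))^{r/2}; (II) if 2^v · pr(u,d) ≤ 1 then σ^r(v,u) ≤ C · (2^v · pr(u,d))^{r/2} · (log(2/(2^v · pr(u,d))))^{d−1}. -/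

import Mathlib

/-!
With `t_j = log₂ u_j` and `ρ = (r/2) log 2`, the `j`-th factor of `σ^r(v,u)` is
`exp (-ρ |s_j + t_j|)`, and `A := v + ∑ t_j = log₂ (2^v pr(u,d))`. Both parts of the theorem
then say `∑_{|s| = v} exp (-ρ ∑ |s_j + t_j|) ≲ exp (-ρ |A|) (1 + |A|)^(d-1)`. This is proved by
induction on `d`: splitting off the first coordinate leaves a discrete convolution
`∑_k exp (-ρ (|k - a| + |k - b|)) (1 + |k - b|)^(d-2)` with `|a - b| = |A|`. The excess
`|k - a| + |k - b| - |a - b|` is twice the distance from `k` to the segment `[a, b]`; half of it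
absorbs the polynomial factor, and with the other half the lattice points off the segment
contribute geometric series, one for each of the `O(1 + |A|)` lattice points on it.
-/

open Finset Real
open scoped Nat

noncomputable def sigmaSum (r d : ℕ) (v : ℕ) (u : Fin d → ℝ) : ℝ :=
  ∑ s ∈ Finset.Nat.antidiagonalTuple d v,
    ∏ j, min (((2 : ℝ) ^ (s j) * u j) ^ ((r : ℝ) / 2))
             (((2 : ℝ) ^ (s j) * u j) ^ (-(r : ℝ) / 2))

lemma summable_exp_neg_mul_abs_int {ρ : ℝ} (hρ : 0 < ρ) :
    Summable fun n : ℤ => exp (-(ρ * |(n : ℝ)|)) := by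
  have hgeom : Summable fun n : ℕ => exp (-ρ) ^ n :=
    summable_geometric_of_lt_one (exp_pos _).le (exp_lt_one_iff.2 (neg_lt_zero.2 hρ))
  refine Summable.of_nat_of_neg ?_ ?_ <;>
    refine hgeom.congr fun n => ?_ <;> simp [← exp_nat_mul, mul_comm]

lemma sum_exp_neg_mul_abs_sub_le_tsum {ρ : ℝ} (hρ : 0 < ρ) (S : Finset ℤ) (m : ℤ) :
    ∑ k ∈ S, exp (-(ρ * |(k : ℝ) - m|)) ≤ ∑' n : ℤ, exp (-(ρ * |(n : ℝ)|)) := by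
  calc ∑ k ∈ S, exp (-(ρ * |(k : ℝ) - m|))
      = ∑ n ∈ S.map (Equiv.subRight m).toEmbedding, exp (-(ρ * |(n : ℝ)|)) := by simp
    _ ≤ _ := (summable_exp_neg_mul_abs_int hρ).sum_le_tsum _ fun _ _ => (exp_pos _).le

lemma exists_mem_Icc_floor_ceil_abs_sub_le (k : ℤ) {a b : ℝ} (hab : a ≤ b) :
    ∃ m ∈ Icc ⌊a⌋ ⌈b⌉, |(k : ℝ) - m| ≤ |k - a| + |k - b| - (b - a) := by
  have hfa := Int.floor_le a
  have hcb := Int.le_ceil b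
  have hfc : ⌊a⌋ ≤ ⌈b⌉ := (Int.floor_le_ceil a).trans (Int.ceil_mono hab)
  rcases le_or_gt k ⌊a⌋ with hk | hk
  · refine ⟨⌊a⌋, left_mem_Icc.2 hfc, ?_⟩
    have : (k : ℝ) ≤ ⌊a⌋ := Int.cast_le.2 hk
    rw [abs_of_nonpos (by linarith), abs_of_nonpos (by linarith), abs_of_nonpos (by linarith)]
    linarith
  rcases le_or_gt ⌈b⌉ k with hk' | hk'
  · refine ⟨⌈b⌉, right_mem_Icc.2 hfc, ?_⟩
    have : (⌈b⌉ : ℝ) ≤ k := Int.cast_le.2 hk'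
    rw [abs_of_nonneg (by linarith), abs_of_nonneg (by linarith), abs_of_nonneg (by linarith)]
    linarith
  · refine ⟨k, mem_Icc.2 ⟨hk.le, hk'.le⟩, ?_⟩
    simp only [sub_self, abs_zero, sub_nonneg]
    calc b - a = |(k - a) - (k - b : ℝ)| := by rw [abs_of_nonneg (by linarith)]; ring
      _ ≤ |(k : ℝ) - a| + |k - b| := abs_sub _ _

lemma exists_sum_exp_neg_triangle_defect_le {ρ : ℝ} (hρ : 0 < ρ) :
    ∃ C, 0 < C ∧ ∀ (S : Finset ℤ) (a b : ℝ),
      ∑ k ∈ S, exp (-(ρ * (|(k : ℝ) - a| + |k - b| - |a - b|))) ≤ C * (1 + |a - b|) := by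
  set Q := ∑' n : ℤ, exp (-(ρ * |(n : ℝ)|))
  have hQ : 0 < Q := (summable_exp_neg_mul_abs_int hρ).tsum_pos (fun _ => (exp_pos _).le) 0
    (exp_pos _)
  refine ⟨3 * Q, by positivity, fun S a b => ?_⟩
  wlog hab : a ≤ b generalizing a b
  · simpa only [add_comm |(_ : ℝ) - a|, abs_sub_comm a b] using this b a (le_of_not_ge hab)
  rw [abs_sub_comm, abs_of_nonneg (sub_nonneg.2 hab)]
  set M := Icc ⌊a⌋ ⌈b⌉
  have hM : (#M : ℝ) ≤ b - a + 3 := by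
    have hfc : ⌊a⌋ ≤ ⌈b⌉ + 1 := by
      have := (Int.floor_le_ceil a).trans (Int.ceil_mono hab)
      omega
    have hcard : (#M : ℝ) = ⌈b⌉ + 1 - ⌊a⌋ := by exact_mod_cast Int.card_Icc_of_le _ _ hfc
    linarith [Int.ceil_lt_add_one b, Int.sub_one_lt_floor a]
  calc ∑ k ∈ S, exp (-(ρ * (|(k : ℝ) - a| + |k - b| - (b - a))))
      ≤ ∑ k ∈ S, ∑ m ∈ M, exp (-(ρ * |(k : ℝ) - m|)) := by
        refine sum_le_sum fun k _ => ?_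
        obtain ⟨m, hm, hkm⟩ := exists_mem_Icc_floor_ceil_abs_sub_le k hab
        refine le_trans ?_ (single_le_sum (fun _ _ => (exp_pos _).le) hm)
        gcongr
    _ = ∑ m ∈ M, ∑ k ∈ S, exp (-(ρ * |(k : ℝ) - m|)) := sum_comm
    _ ≤ ∑ m ∈ M, Q := sum_le_sum fun m _ => sum_exp_neg_mul_abs_sub_le_tsum hρ S m
    _ ≤ 3 * Q * (1 + (b - a)) := by
        rw [sum_const, nsmul_eq_mul]
        nlinarith

lemma pow_le_mul_exp {ρ x : ℝ} (hρ : 0 < ρ) (hx : 0 ≤ x) (n : ℕ) :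
    x ^ n ≤ n ! / ρ ^ n * exp (ρ * x) := by
  have h := pow_div_factorial_le_exp _ (mul_nonneg hρ.le hx) n
  rw [div_le_iff₀ (by positivity), mul_pow] at h
  rw [div_mul_eq_mul_div, le_div_iff₀ (by positivity)]
  linarith

lemma exp_neg_mul_abs_add_abs_mul_pow_le {ρ : ℝ} (hρ : 0 < ρ) (m : ℕ) (p q : ℝ) :
    exp (-(ρ * (|p| + |q|))) * (1 + |q|) ^ m ≤
      m ! / (ρ / 2) ^ m * exp (ρ / 2) * exp (-(ρ * |p - q|)) * (1 + |p - q|) ^ m *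
        exp (-(ρ / 2 * (|p| + |q| - |p - q|))) := by
  set E := |p| + |q| - |p - q| with hE_def
  have hE : 0 ≤ E := by linarith [abs_sub p q]
  have hq : 1 + |q| ≤ (1 + |p - q|) * (1 + E) := by nlinarith [abs_nonneg p, abs_nonneg (p - q)]
  have hexp : exp (-(ρ * (|p| + |q|))) * exp (ρ / 2 * (1 + E)) =
      exp (ρ / 2) * exp (-(ρ * |p - q|)) * exp (-(ρ / 2 * E)) := by
    simp only [← exp_add, hE_def]
    ring_nf
  calc exp (-(ρ * (|p| + |q|))) * (1 + |q|) ^ m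
      ≤ exp (-(ρ * (|p| + |q|))) * ((1 + |p - q|) ^ m * (1 + E) ^ m) := by
        rw [← mul_pow]; gcongr
    _ ≤ exp (-(ρ * (|p| + |q|))) *
          ((1 + |p - q|) ^ m * (m ! / (ρ / 2) ^ m * exp (ρ / 2 * (1 + E)))) := by
        gcongr
        exact pow_le_mul_exp (half_pos hρ) (by linarith) m
    _ = _ := by linear_combination (1 + |p - q|) ^ m * (m ! / (ρ / 2) ^ m) * hexp


lemma exists_sum_exp_neg_abs_sub_add_abs_sub_mul_pow_le {ρ : ℝ} (hρ : 0 < ρ) (m : ℕ) :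
    ∃ C, 0 < C ∧ ∀ (S : Finset ℤ) (a b : ℝ),
      ∑ k ∈ S, exp (-(ρ * (|(k : ℝ) - a| + |k - b|))) * (1 + |k - b|) ^ m ≤
        C * exp (-(ρ * |a - b|)) * (1 + |a - b|) ^ (m + 1) := by
  obtain ⟨C₀, hC₀, hsum⟩ := exists_sum_exp_neg_triangle_defect_le (half_pos hρ)
  set K := m ! / (ρ / 2) ^ m * exp (ρ / 2)
  refine ⟨K * C₀, by positivity, fun S a b => ?_⟩
  calc ∑ k ∈ S, exp (-(ρ * (|(k : ℝ) - a| + |k - b|))) * (1 + |k - b|) ^ m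
      ≤ ∑ k ∈ S, K * exp (-(ρ * |a - b|)) * (1 + |a - b|) ^ m *
          exp (-(ρ / 2 * (|(k : ℝ) - a| + |k - b| - |a - b|))) := by
        refine sum_le_sum fun k _ => ?_
        have h := exp_neg_mul_abs_add_abs_mul_pow_le hρ m (k - a) (k - b)
        rwa [sub_sub_sub_cancel_left, abs_sub_comm b] at h
    _ ≤ K * exp (-(ρ * |a - b|)) * (1 + |a - b|) ^ m * (C₀ * (1 + |a - b|)) := by
        rw [← mul_sum]
        gcongr
        exact hsum S a b
    _ = K * C₀ * exp (-(ρ * |a - b|)) * (1 + |a - b|) ^ (m + 1) := by ring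

theorem Finset.Nat.sum_antidiagonalTuple_succ {M : Type*} [AddCommMonoid M] (k n : ℕ)
    (f : (Fin (k + 1) → ℕ) → M) :
    ∑ x ∈ antidiagonalTuple (k + 1) n, f x =
      ∑ p ∈ antidiagonal n, ∑ x ∈ antidiagonalTuple k p.2, f (Fin.cons p.1 x) := by
  rw [sum_sigma']
  refine sum_nbij' (fun x => ⟨(x 0, n - x 0), Fin.tail x⟩) (fun y => Fin.cons y.1.1 y.2)
    ?_ ?_ ?_ ?_ ?_
  · intro x hx
    simp only [mem_antidiagonalTuple, Fin.sum_univ_succ] at hx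
    simp only [mem_sigma, HasAntidiagonal.mem_antidiagonal, mem_antidiagonalTuple, Fin.tail]
    omega
  · rintro ⟨⟨i, j⟩, x⟩ h
    simp only [mem_sigma, HasAntidiagonal.mem_antidiagonal, mem_antidiagonalTuple] at h
    simp [mem_antidiagonalTuple, Fin.sum_univ_succ, h.2, h.1]
  · intro x _
    simp
  · rintro ⟨⟨i, j⟩, x⟩ h
    simp only [mem_sigma, HasAntidiagonal.mem_antidiagonal, mem_antidiagonalTuple] at h
    simp [← h.1]
  · intro x _
    simp

theorem exists_sum_antidiagonalTuple_exp_neg_le {ρ : ℝ} (hρ : 0 < ρ) (d : ℕ) :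
    ∃ C, 0 < C ∧ ∀ (v : ℕ) (t : Fin (d + 1) → ℝ),
      ∑ s ∈ Nat.antidiagonalTuple (d + 1) v, exp (-(ρ * ∑ j, |(s j : ℝ) + t j|)) ≤
        C * exp (-(ρ * |v + ∑ j, t j|)) * (1 + |v + ∑ j, t j|) ^ d := by
  induction d with
  | zero => exact ⟨1, one_pos, fun v t => by simp⟩
  | succ d ih =>
    obtain ⟨C, hC, hbound⟩ := ih
    obtain ⟨C', hC', hconv⟩ := exists_sum_exp_neg_abs_sub_add_abs_sub_mul_pow_le hρ d
    refine ⟨C * C', by positivity, fun v t => ?_⟩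
    set A := (v : ℝ) + ∑ j, t j
    set g : ℝ → ℝ := fun x =>
      exp (-(ρ * (|x - -t 0| + |x - (A - t 0)|))) * (1 + |x - (A - t 0)|) ^ d
    have hterm : ∀ p ∈ antidiagonal v, ∑ s ∈ Nat.antidiagonalTuple (d + 1) p.2,
        exp (-(ρ * ∑ j, |((Fin.cons p.1 s : Fin (d + 2) → ℕ) j : ℝ) + t j|)) ≤ C * g p.1 := by
      rintro ⟨i, j⟩ hij
      rw [HasAntidiagonal.mem_antidiagonal] at hij
      have hrest : j + ∑ l : Fin (d + 1), t l.succ = -(i - (A - t 0)) := by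
        simp only [A, Fin.sum_univ_succ (n := d + 1), ← hij]; push_cast; ring
      simp only [Fin.sum_univ_succ (n := d + 1), Fin.cons_zero, Fin.cons_succ, mul_add, neg_add,
        exp_add, ← mul_sum]
      calc _ ≤ exp (-(ρ * |i + t 0|)) * (C * exp (-(ρ * |j + ∑ l : Fin (d + 1), t l.succ|)) *
              (1 + |j + ∑ l : Fin (d + 1), t l.succ|) ^ d) := by
            gcongr
            exact hbound j fun l : Fin (d + 1) => t l.succ
        _ = C * g i := by
            simp only [g, hrest, abs_neg, sub_neg_eq_add, mul_add, neg_add, exp_add]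
            ring
    calc _ = ∑ p ∈ antidiagonal v, ∑ s ∈ Nat.antidiagonalTuple (d + 1) p.2,
          exp (-(ρ * ∑ j, |((Fin.cons p.1 s : Fin (d + 2) → ℕ) j : ℝ) + t j|)) :=
          Nat.sum_antidiagonalTuple_succ _ _ _
      _ ≤ ∑ p ∈ antidiagonal v, C * g p.1 := sum_le_sum hterm
      _ = C * ∑ k ∈ (range (v + 1)).map (Nat.castEmbedding : ℕ ↪ ℤ), g k := by
          rw [← mul_sum, Nat.sum_antidiagonal_eq_sum_range_succ (fun i _ => g i), sum_map]
          simp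
      _ ≤ C * (C' * exp (-(ρ * |-t 0 - (A - t 0)|)) * (1 + |-t 0 - (A - t 0)|) ^ (d + 1)) := by
          gcongr
          exact hconv _ (-t 0) (A - t 0)
      _ = C * C' * exp (-(ρ * |A|)) * (1 + |A|) ^ (d + 1) := by
          rw [show -t 0 - (A - t 0) = -A by ring, abs_neg]
          ring

lemma min_rpow_rpow_neg_eq_exp {z : ℝ} (hz : 0 < z) {p : ℝ} (hp : 0 ≤ p) :
    min (z ^ p) (z ^ (-p)) = exp (-(p * |log z|)) := by
  rw [rpow_def_of_pos hz, rpow_def_of_pos hz]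
  rcases le_total 0 (log z) with h | h
  · rw [abs_of_nonneg h, min_eq_right (exp_le_exp.2 (by nlinarith))]
    ring_nf
  · rw [abs_of_nonpos h, min_eq_left (exp_le_exp.2 (by nlinarith))]
    ring_nf

lemma sigmaSum_eq (r d v : ℕ) {u : Fin d → ℝ} (hu : ∀ j, 0 < u j) :
    sigmaSum r d v u = ∑ s ∈ Nat.antidiagonalTuple d v,
      exp (-(r / 2 * log 2 * ∑ j, |(s j : ℝ) + logb 2 (u j)|)) := by
  refine sum_congr rfl fun s _ => ?_
  have hfactor : ∀ j, min (((2 : ℝ) ^ (s j) * u j) ^ ((r : ℝ) / 2))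
      (((2 : ℝ) ^ (s j) * u j) ^ (-(r : ℝ) / 2)) =
        exp (-(r / 2 * log 2 * |(s j : ℝ) + logb 2 (u j)|)) := by
    intro j
    have hlog : log ((2 : ℝ) ^ (s j) * u j) = log 2 * ((s j : ℝ) + logb 2 (u j)) := by
      rw [log_mul (by positivity) (hu j).ne', log_pow, logb, mul_add,
        mul_div_cancel₀ _ (log_pos one_lt_two).ne']
      ring
    rw [neg_div, min_rpow_rpow_neg_eq_exp (mul_pos (by positivity) (hu j)) (by positivity), hlog,
      abs_mul, abs_of_pos (log_pos one_lt_two), mul_assoc]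
  rw [prod_congr rfl fun j _ => hfactor j, ← exp_sum, mul_sum, sum_neg_distrib]

lemma exists_sigmaSum_le {r : ℕ} (hr : 0 < r) (n : ℕ) :
    ∃ C, 0 < C ∧ ∀ (v : ℕ) (u : Fin (n + 1) → ℝ), (∀ j, 0 < u j) →
      sigmaSum r (n + 1) v u ≤
        C * min (((2 : ℝ) ^ v * ∏ j, u j) ^ ((r : ℝ) / 2))
          (((2 : ℝ) ^ v * ∏ j, u j) ^ (-((r : ℝ) / 2))) *
          (log 2 + |log ((2 : ℝ) ^ v * ∏ j, u j)|) ^ n := by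
  have hlog2 : 0 < log 2 := log_pos one_lt_two
  obtain ⟨C, hC, hbound⟩ := exists_sum_antidiagonalTuple_exp_neg_le
    (mul_pos (by positivity : (0 : ℝ) < r / 2) hlog2) n
  refine ⟨C / log 2 ^ n, by positivity, fun v u hu => ?_⟩
  set P := (2 : ℝ) ^ v * ∏ j, u j
  have hP : 0 < P := mul_pos (by positivity) (prod_pos fun j _ => hu j)
  have hA : (v : ℝ) + ∑ j, logb 2 (u j) = log P / log 2 := by
    rw [← logb, logb_mul (by positivity) (prod_pos fun j _ => hu j).ne', logb_pow,
      logb_self_eq_one one_lt_two, logb_prod _ _ fun j _ => (hu j).ne']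
    ring
  calc sigmaSum r (n + 1) v u
      ≤ C * exp (-(r / 2 * log 2 * |log P / log 2|)) * (1 + |log P / log 2|) ^ n := by
        rw [sigmaSum_eq r _ v hu, ← hA]
        exact hbound v _
    _ = _ := by
        rw [min_rpow_rpow_neg_eq_exp hP (by positivity), abs_div, abs_of_pos hlog2]
        field_simp
        rw [← mul_pow, div_mul_cancel₀ _ hlog2.ne']

theorem statement10 :
    ∀ d : ℕ, 1 ≤ d → ∀ r : ℕ, 1 ≤ r → ∃ C : ℝ, 0 < C ∧
      ∀ v : ℕ, ∀ u : Fin d → ℝ, (∀ j, 0 < u j) →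
        ((1 ≤ (2 : ℝ) ^ v * ∏ j, u j →
          sigmaSum r d v u ≤
            C * Real.log ((2 : ℝ) ^ (v + 1) * ∏ j, u j) ^ (d - 1)
              / ((2 : ℝ) ^ v * ∏ j, u j) ^ ((r : ℝ) / 2)) ∧
        ((2 : ℝ) ^ v * ∏ j, u j ≤ 1 →
          sigmaSum r d v u ≤
            C * ((2 : ℝ) ^ v * ∏ j, u j) ^ ((r : ℝ) / 2)
              * Real.log (2 / ((2 : ℝ) ^ v * ∏ j, u j)) ^ (d - 1))) := by
  intro d hd r hr
  obtain ⟨n, rfl⟩ : ∃ n, d = n + 1 := ⟨d - 1, by omega⟩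
  obtain ⟨C, hC, hbound⟩ := exists_sigmaSum_le hr n
  refine ⟨C, hC, fun v u hu => ?_⟩
  have hP : 0 < (2 : ℝ) ^ v * ∏ j, u j := mul_pos (by positivity) (prod_pos fun j _ => hu j)
  have hr2 : 0 ≤ (r : ℝ) / 2 := by positivity
  rw [Nat.add_sub_cancel]
  constructor
  · intro hP1
    have h := hbound v u hu
    rw [min_eq_right (rpow_le_rpow_of_exponent_le hP1 (by linarith)), rpow_neg hP.le,
      abs_of_nonneg (log_nonneg hP1), ← log_mul two_ne_zero hP.ne', ← mul_assoc,
      ← pow_succ'] at h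
    exact h.trans_eq (by ring)
  · intro hP1
    have h := hbound v u hu
    rwa [min_eq_left (rpow_le_rpow_of_exponent_ge hP hP1 (by linarith)),
      abs_of_nonpos (log_nonpos hP.le hP1), ← sub_eq_add_neg, ← log_div two_ne_zero hP.ne'] at h
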